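/- Along the gradient flow θ'(t) = −∇L(θ(t)) of the loss L(w₁,...,w_H) = ℓ(μ(w₁,...,w_H)) where μ is multilinear and ℓ differentiable, the quantities δ_l(t) = ‖w_{l+1}(t)‖² − ‖w_l(t)‖² are constant in t for each l = 1,...,H−1. -/

import Mathlib

open InnerProductSpace

/-- Along the gradient flow θ'(t) = −∇L(θ(t)) of L = ℓ ∘ μ with μ multilinear
and ℓ differentiable, the quantities δ_l(t) = ‖w_{l+1}(t)‖² − ‖w_l(t)‖² are constant in t.
The gradient flow is expressed slot-wise: each layer filter evolves by the negative gradient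
of the loss with respect to that layer. -/
theorem stmt_15 (H : ℕ) (k : Fin H → ℕ) (m : ℕ)
    (μ : ContinuousMultilinearMap ℝ (fun i : Fin H => EuclideanSpace ℝ (Fin (k i)))
      (EuclideanSpace ℝ (Fin m)))
    (ℓ : EuclideanSpace ℝ (Fin m) → ℝ) (hℓ : Differentiable ℝ ℓ)
    (θ : ℝ → ∀ i, EuclideanSpace ℝ (Fin (k i)))
    (hflow : ∀ t : ℝ, ∀ i : Fin H,
      HasDerivAt (fun s => θ s i)
        (-(gradient (fun wi => ℓ (μ (Function.update (θ t) i wi))) (θ t i))) t) :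
    ∀ l : ℕ, ∀ h : l + 1 < H, ∀ t : ℝ,
      ‖θ t ⟨l + 1, h⟩‖ ^ 2 - ‖θ t ⟨l, by omega⟩‖ ^ 2
        = ‖θ 0 ⟨l + 1, h⟩‖ ^ 2 - ‖θ 0 ⟨l, by omega⟩‖ ^ 2 := by
  -- the common derivative of all ‖θ t i‖²
  set c : ℝ → ℝ := fun s => -(2 * (fderiv ℝ ℓ (μ (θ s)) (μ (θ s)))) with hc
  have key : ∀ (i : Fin H) (s : ℝ), HasDerivAt (fun u => ‖θ u i‖ ^ 2) (c s) s := by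
    intro i s
    set A : EuclideanSpace ℝ (Fin (k i)) →L[ℝ] EuclideanSpace ℝ (Fin m) :=
      μ.toContinuousLinearMap (θ s) i with hA
    have hAx : ∀ x, A x = μ (Function.update (θ s) i x) := fun x => rfl
    have hf : HasFDerivAt (fun wi => ℓ (μ (Function.update (θ s) i wi)))
        ((fderiv ℝ ℓ (A (θ s i))).comp A) (θ s i) := by
      have := ((hℓ (A (θ s i))).hasFDerivAt).comp (θ s i) A.hasFDerivAt
      exact this
    have hgrad : gradient (fun wi => ℓ (μ (Function.update (θ s) i wi))) (θ s i)
        = (toDual ℝ _).symm ((fderiv ℝ ℓ (A (θ s i))).comp A) :=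
      (hf.hasGradientAt).gradient
    have hθ := hflow s i
    have hin := HasDerivAt.inner ℝ hθ hθ
    have hμ : A (θ s i) = μ (θ s) := by rw [hAx, Function.update_eq_self]
    have hip : (inner ℝ
          (gradient (fun wi => ℓ (μ (Function.update (θ s) i wi))) (θ s i)) (θ s i) : ℝ)
        = fderiv ℝ ℓ (μ (θ s)) (μ (θ s)) := by
      rw [hgrad, toDual_symm_apply]
      simp only [ContinuousLinearMap.comp_apply, hμ]
    have hval : (inner ℝ (θ s i)
            (-(gradient (fun wi => ℓ (μ (Function.update (θ s) i wi))) (θ s i)))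
          + inner ℝ (-(gradient (fun wi => ℓ (μ (Function.update (θ s) i wi))) (θ s i)))
            (θ s i) : ℝ) = c s := by
      rw [inner_neg_right, inner_neg_left, real_inner_comm
        (gradient (fun wi => ℓ (μ (Function.update (θ s) i wi))) (θ s i)) (θ s i), hip, hc]
      ring
    have hin' : HasDerivAt (fun u => (inner ℝ (θ u i) (θ u i) : ℝ)) (c s) s := hval ▸ hin
    have heq : (fun u => ‖θ u i‖ ^ 2) = fun u => (inner ℝ (θ u i) (θ u i) : ℝ) := by
      funext u; rw [real_inner_self_eq_norm_sq]
    rw [heq]; exact hin'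
  intro l h t
  set i₁ : Fin H := ⟨l + 1, h⟩
  set i₀ : Fin H := ⟨l, by omega⟩
  have hd : ∀ s : ℝ, HasDerivAt (fun u => ‖θ u i₁‖ ^ 2 - ‖θ u i₀‖ ^ 2) 0 s := by
    intro s
    have := (key i₁ s).fun_sub (key i₀ s)
    simpa using this
  have hconst : ∀ x y : ℝ, (fun u => ‖θ u i₁‖ ^ 2 - ‖θ u i₀‖ ^ 2) x
      = (fun u => ‖θ u i₁‖ ^ 2 - ‖θ u i₀‖ ^ 2) y := by
    intro x y
    exact is_const_of_deriv_eq_zero (fun u => (hd u).differentiableAt)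
      (fun u => (hd u).deriv) x y
  exact hconst t 0
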